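/- arXiv:1006.0277 — 8 statements merged into one kernel-verified Lean document; each statement's English description precedes it below -/
import Mathlib

section
/- Let 0 < p ≤ 1 and let S_ρ(x) denote the sum of the ⌈ρm⌉ largest values among |x_1|^p, ..., |x_m|^p for x ∈ ℝ^m. Then for any x, x' ∈ ℝ^m, |S_ρ(x) − S_ρ(x')| ≤ ∑_{i=1}^m |x_i − x'_i|^p. -/
/-! Since `t ↦ t ^ p` is subadditive on `[0, ∞)` for `0 ≤ p ≤ 1`, we have
`|x i| ^ p ≤ |x' i| ^ p + |x i - x' i| ^ p`. Summing over any index set `T` of size `k`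
bounds `∑ i ∈ T, |x i| ^ p` by `S(x') + ∑ i, |x i - x' i| ^ p`; taking the supremum over `T`
gives `S(x) - S(x') ≤ ∑ i, |x i - x' i| ^ p`, and the other direction is symmetric. -/

/-- `Srho p k x` is the sum of the `k` largest values among `|x i| ^ p`,
expressed as the supremum over all subsets of cardinality `k` of the sum over the subset. -/
noncomputable def Srho (p : ℝ) (k : ℕ) {m : ℕ} (x : Fin m → ℝ) : ℝ :=
  sSup {s : ℝ | ∃ T : Finset (Fin m), T.card = k ∧ s = ∑ i ∈ T, |x i| ^ p}

lemma abs_rpow_le_abs_rpow_add_abs_sub_rpow {p : ℝ} (hp0 : 0 ≤ p) (hp1 : p ≤ 1) (a b : ℝ) :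
    |a| ^ p ≤ |b| ^ p + |a - b| ^ p := by
  have htri : |a| ≤ |b| + |a - b| := by linarith [abs_sub_abs_le_abs_sub a b]
  calc |a| ^ p ≤ (|b| + |a - b|) ^ p := Real.rpow_le_rpow (abs_nonneg a) htri hp0
    _ ≤ |b| ^ p + |a - b| ^ p :=
      Real.rpow_add_le_add_rpow (abs_nonneg b) (abs_nonneg _) hp0 hp1

section Srho

variable {m : ℕ} (p : ℝ) (k : ℕ) (x : Fin m → ℝ)

lemma bddAbove_Srho_set :
    BddAbove {s : ℝ | ∃ T : Finset (Fin m), T.card = k ∧ s = ∑ i ∈ T, |x i| ^ p} :=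
  (Set.finite_range fun T : Finset (Fin m) => ∑ i ∈ T, |x i| ^ p).bddAbove.mono
    (by rintro _ ⟨T, -, rfl⟩; exact ⟨T, rfl⟩)

lemma sum_le_Srho {T : Finset (Fin m)} (hT : T.card = k) :
    ∑ i ∈ T, |x i| ^ p ≤ Srho p k x :=
  le_csSup (bddAbove_Srho_set p k x) ⟨T, hT, rfl⟩

lemma Srho_nonneg : 0 ≤ Srho p k x :=
  Real.sSup_nonneg fun _ ⟨_, _, hs⟩ =>
    hs ▸ Finset.sum_nonneg fun _ _ => Real.rpow_nonneg (abs_nonneg _) p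

end Srho

lemma Srho_le_add_sum_abs_sub_rpow {m : ℕ} {p : ℝ} (hp0 : 0 ≤ p) (hp1 : p ≤ 1) (k : ℕ)
    (x x' : Fin m → ℝ) :
    Srho p k x ≤ Srho p k x' + ∑ i, |x i - x' i| ^ p := by
  have hdist_nonneg : ∀ i, 0 ≤ |x i - x' i| ^ p := fun _ => Real.rpow_nonneg (abs_nonneg _) p
  refine Real.sSup_le ?_
    (add_nonneg (Srho_nonneg p k x') (Finset.sum_nonneg fun i _ => hdist_nonneg i))
  rintro s ⟨T, hT, rfl⟩
  calc ∑ i ∈ T, |x i| ^ p ≤ ∑ i ∈ T, (|x' i| ^ p + |x i - x' i| ^ p) :=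
        Finset.sum_le_sum fun i _ => abs_rpow_le_abs_rpow_add_abs_sub_rpow hp0 hp1 (x i) (x' i)
    _ = ∑ i ∈ T, |x' i| ^ p + ∑ i ∈ T, |x i - x' i| ^ p := Finset.sum_add_distrib
    _ ≤ Srho p k x' + ∑ i, |x i - x' i| ^ p :=
        add_le_add (sum_le_Srho p k x' hT) (Finset.sum_le_univ_sum_of_nonneg hdist_nonneg)

theorem stmt_3_general (p ρ : ℝ) (hp0 : 0 < p) (hp1 : p ≤ 1)
    (m : ℕ) (x x' : Fin m → ℝ) :
    |Srho p ⌈ρ * m⌉₊ x - Srho p ⌈ρ * m⌉₊ x'| ≤ ∑ i, |x i - x' i| ^ p := by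
  have hle := Srho_le_add_sum_abs_sub_rpow hp0.le hp1 ⌈ρ * m⌉₊ x x'
  have hge := Srho_le_add_sum_abs_sub_rpow hp0.le hp1 ⌈ρ * m⌉₊ x' x
  simp only [abs_sub_comm (x' _)] at hge
  rw [abs_sub_le_iff]
  constructor <;> linarith

theorem stmt_3 (p ρ : ℝ) (hp0 : 0 < p) (hp1 : p ≤ 1) (hρ0 : 0 < ρ) (hρ1 : ρ ≤ 1)
    (m : ℕ) (x x' : Fin m → ℝ) :
    |Srho p ⌈ρ * m⌉₊ x - Srho p ⌈ρ * m⌉₊ x'| ≤ ∑ i, |x i - x' i| ^ p :=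
  stmt_3_general p ρ hp0 hp1 m x x'
end

section
/- Let A be an m×n real matrix, 0 < p ≤ 1, and ρ ∈ (0,1). Suppose for every nonzero z ∈ ℝ^n and every set T ⊆ {1,...,m} with |T| ≤ ρm, we have ∑_{i∈T} |(Az)_i|^p < ∑_{i∈T^c} |(Az)_i|^p. Then for every f ∈ ℝ^n and every e ∈ ℝ^m with support of size at most ρm, f is the unique minimizer over x ∈ ℝ^n of ∑_{i=1}^m |(Af + e − Ax)_i|^p. -/
/-!
Put `z = f - x ≠ 0` and let `T` be the support of `e`. Since `t ↦ |t| ^ p` is subadditive for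
`p ≤ 1`, on `T` we have `|eᵢ| ^ p ≤ |(Az)ᵢ + eᵢ| ^ p + |(Az)ᵢ| ^ p`, and the null space property
trades `∑_{i ∈ T} |(Az)ᵢ| ^ p` for the strictly larger
`∑_{i ∉ T} |(Az)ᵢ| ^ p = ∑_{i ∉ T} |(Az)ᵢ + eᵢ| ^ p`.
-/

open Finset

lemma Real.abs_add_rpow_le {p : ℝ} (hp0 : 0 ≤ p) (hp1 : p ≤ 1) (a b : ℝ) :
    |a + b| ^ p ≤ |a| ^ p + |b| ^ p :=
  (Real.rpow_le_rpow (abs_nonneg _) (abs_add_le a b) hp0).trans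
    (Real.rpow_add_le_add_rpow (abs_nonneg a) (abs_nonneg b) hp0 hp1)

lemma sum_abs_rpow_lt_sum_abs_add_rpow {ι : Type*} [Fintype ι] [DecidableEq ι] {p : ℝ}
    (hp0 : 0 < p) (hp1 : p ≤ 1) {u e : ι → ℝ} {T : Finset ι} (he : ∀ i ∉ T, e i = 0)
    (hu : ∑ i ∈ T, |u i| ^ p < ∑ i ∈ Tᶜ, |u i| ^ p) :
    ∑ i, |e i| ^ p < ∑ i, |u i + e i| ^ p := by
  have he_compl : ∀ i ∈ Tᶜ, e i = 0 := fun i hi => he i (mem_compl.mp hi)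
  have hpt (i : ι) : |e i| ^ p ≤ |u i + e i| ^ p + |u i| ^ p := by
    simpa using Real.abs_add_rpow_le hp0.le hp1 (u i + e i) (-u i)
  have hcompl : ∑ i ∈ Tᶜ, |u i + e i| ^ p = ∑ i ∈ Tᶜ, |u i| ^ p :=
    sum_congr rfl fun i hi => by rw [he_compl i hi, add_zero]
  calc ∑ i, |e i| ^ p
      = ∑ i ∈ T, |e i| ^ p := (sum_subset (subset_univ T) fun i _ hi => by
        rw [he i hi, abs_zero, Real.zero_rpow hp0.ne']).symm
    _ ≤ ∑ i ∈ T, |u i + e i| ^ p + ∑ i ∈ T, |u i| ^ p := by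
        rw [← sum_add_distrib]; exact sum_le_sum fun i _ => hpt i
    _ < ∑ i ∈ T, |u i + e i| ^ p + ∑ i ∈ Tᶜ, |u i + e i| ^ p := by rw [hcompl]; gcongr
    _ = ∑ i, |u i + e i| ^ p := sum_add_sum_compl T _

theorem stmt_5_general (m n : ℕ) (A : Matrix (Fin m) (Fin n) ℝ) (p ρ : ℝ)
    (hp0 : 0 < p) (hp1 : p ≤ 1)
    (hNSP : ∀ z : Fin n → ℝ, z ≠ 0 → ∀ T : Finset (Fin m), (T.card : ℝ) ≤ ρ * m →
      ∑ i ∈ T, |A.mulVec z i| ^ p < ∑ i ∈ Tᶜ, |A.mulVec z i| ^ p) :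
    ∀ (f : Fin n → ℝ) (e : Fin m → ℝ),
      ((Finset.univ.filter (fun i => e i ≠ 0)).card : ℝ) ≤ ρ * m →
      ∀ x : Fin n → ℝ, x ≠ f →
        ∑ i, |e i| ^ p < ∑ i, |A.mulVec f i + e i - A.mulVec x i| ^ p := by
  intro f e he x hx
  have hres (i : Fin m) : A.mulVec f i + e i - A.mulVec x i = A.mulVec (f - x) i + e i := by
    rw [Matrix.mulVec_sub, Pi.sub_apply]; ring
  simp only [hres]
  exact sum_abs_rpow_lt_sum_abs_add_rpow hp0 hp1 (T := univ.filter (fun i => e i ≠ 0))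
    (fun i hi => by simpa using hi) (hNSP _ (sub_ne_zero.mpr hx.symm) _ he)

theorem stmt_5 (m n : ℕ) (A : Matrix (Fin m) (Fin n) ℝ) (p ρ : ℝ)
    (hp0 : 0 < p) (hp1 : p ≤ 1) (hρ0 : 0 < ρ) (hρ1 : ρ < 1)
    (hNSP : ∀ z : Fin n → ℝ, z ≠ 0 → ∀ T : Finset (Fin m), (T.card : ℝ) ≤ ρ * m →
      ∑ i ∈ T, |A.mulVec z i| ^ p < ∑ i ∈ Tᶜ, |A.mulVec z i| ^ p) :
    ∀ (f : Fin n → ℝ) (e : Fin m → ℝ),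
      ((Finset.univ.filter (fun i => e i ≠ 0)).card : ℝ) ≤ ρ * m →
      ∀ x : Fin n → ℝ, x ≠ f →
        ∑ i, |e i| ^ p < ∑ i, |A.mulVec f i + e i - A.mulVec x i| ^ p :=
  stmt_5_general m n A p ρ hp0 hp1 hNSP
end

section
/- Let A be an m×n real matrix, 0 < p ≤ 1, and ρ ∈ (0,1). Suppose there exist a nonzero z ∈ ℝ^n and a set T with |T| ≤ ρm such that ∑_{i∈T} |(Az)_i|^p > ∑_{i∈T^c} |(Az)_i|^p. Then there exist f ∈ ℝ^n and an error vector e supported on T such that f is not the unique minimizer of x ↦ ∑_i |(Af + e − Ax)_i|^p. -/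
/-!
Take `f = 0` and let the error `e` agree with `A z` on `T` and vanish off `T`. Then the
residual at `x = z` is `Af + e - Az = -(A z restricted to Tᶜ)`, so the ℓ_p objective at `z` is
`∑_{Tᶜ} |(Az)_i|^p`, while at `f` it is `∑_T |(Az)_i|^p`; the failure of the null space
condition on `z` says exactly that `z ≠ f` does at least as well as `f`.
-/

open Finset

theorem sum_abs_rpow_indicator {ι : Type*} [Fintype ι] (s : Finset ι) (v : ι → ℝ) {p : ℝ}
    (hp : p ≠ 0) : ∑ i, |(s : Set ι).indicator v i| ^ p = ∑ i ∈ s, |v i| ^ p := by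
  have hzero : |(0 : ℝ)| ^ p = 0 := by simp [Real.zero_rpow hp]
  rw [← Finset.sum_indicator_subset _ (subset_univ s)]
  exact Fintype.sum_congr _ _ fun i =>
    (congrFun (Set.indicator_comp_of_zero (g := fun t : ℝ => |t| ^ p) (f := v) hzero) i).symm

theorem Set.indicator_sub_self {α G : Type*} [AddGroup G] (s : Set α) (v : α → G) :
    s.indicator v - v = -sᶜ.indicator v := by
  rw [Set.indicator_compl, neg_sub]

theorem stmt_6_general (m n : ℕ) (A : Matrix (Fin m) (Fin n) ℝ) (p : ℝ)
    (hp0 : 0 < p)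
    (z : Fin n → ℝ) (hz : z ≠ 0) (T : Finset (Fin m))
    (hfail : ∑ i ∈ T, |A.mulVec z i| ^ p > ∑ i ∈ Tᶜ, |A.mulVec z i| ^ p) :
    ∃ (f : Fin n → ℝ) (e : Fin m → ℝ),
      (∀ i ∉ T, e i = 0) ∧
      ∃ x : Fin n → ℝ, x ≠ f ∧
        ∑ i, |A.mulVec f i + e i - A.mulVec x i| ^ p ≤ ∑ i, |e i| ^ p := by
  set e := (T : Set (Fin m)).indicator (A.mulVec z)
  refine ⟨0, e, fun i hi => Set.indicator_of_notMem (by simpa using hi) _, z, hz, ?_⟩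
  have hresidual : ∀ i, A.mulVec 0 i + e i - A.mulVec z i
      = -((Tᶜ : Finset (Fin m)) : Set (Fin m)).indicator (A.mulVec z) i := by
    intro i
    rw [Matrix.mulVec_zero, Pi.zero_apply, zero_add, Finset.coe_compl, ← Pi.neg_apply,
      ← Set.indicator_sub_self, Pi.sub_apply]
  simp only [hresidual, abs_neg]
  rw [sum_abs_rpow_indicator _ _ hp0.ne', sum_abs_rpow_indicator _ _ hp0.ne']
  exact hfail.le

theorem stmt_6 (m n : ℕ) (A : Matrix (Fin m) (Fin n) ℝ) (p ρ : ℝ)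
    (hp0 : 0 < p) (hp1 : p ≤ 1) (hρ0 : 0 < ρ) (hρ1 : ρ < 1)
    (z : Fin n → ℝ) (hz : z ≠ 0) (T : Finset (Fin m)) (hT : (T.card : ℝ) ≤ ρ * m)
    (hfail : ∑ i ∈ T, |A.mulVec z i| ^ p > ∑ i ∈ Tᶜ, |A.mulVec z i| ^ p) :
    ∃ (f : Fin n → ℝ) (e : Fin m → ℝ),
      (∀ i ∉ T, e i = 0) ∧
      ∃ x : Fin n → ℝ, x ≠ f ∧
        ∑ i, |A.mulVec f i + e i - A.mulVec x i| ^ p ≤ ∑ i, |e i| ^ p :=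
  stmt_6_general m n A p hp0 z hz T hfail
end

section
/- If the null-space condition ∑_{i∈T} |(Az)_i|^p < ∑_{i∈T^c} |(Az)_i|^p holds for all nonzero z ∈ ℝ^n and all |T| ≤ ρm for some p ∈ (0,1], then it also holds for every q with 0 < q ≤ p. -/
/-! Replacing `T` by a set `T'` of the `|T|` largest entries of `|Az|` only makes the
condition harder, so it suffices to treat such top sets. For those there is a threshold
`t > 0` with `|Az|_i ≥ t` on `T'` and `|Az|_j ≤ t` off `T'`; writing `x^q = x^p · x^(q-p)`
and using that `x ↦ x^(q-p)` is antitone, every term on `T'` loses at least the factor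
`t^(q-p)` and every term off `T'` gains at least that factor. -/

open Finset

theorem Finset.exists_card_eq_sum_le_forall_le {ι M : Type*} [Fintype ι] [DecidableEq ι]
    [AddCommMonoid M] [LinearOrder M] [IsOrderedCancelAddMonoid M] (g : ι → M) (T : Finset ι) :
    ∃ T' : Finset ι, T'.card = T.card ∧ ∑ i ∈ T, g i ≤ ∑ i ∈ T', g i ∧
      ∑ i ∈ T'ᶜ, g i ≤ ∑ i ∈ Tᶜ, g i ∧ ∀ i ∈ T', ∀ j ∈ T'ᶜ, g j ≤ g i := by
  have hT : T ∈ powersetCard T.card (univ : Finset ι) := mem_powersetCard.2 ⟨subset_univ T, rfl⟩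
  obtain ⟨T', hT'mem, hT'max⟩ := exists_max_image _ (fun U => ∑ i ∈ U, g i) ⟨T, hT⟩
  have hcard : T'.card = T.card := (mem_powersetCard.1 hT'mem).2
  have hle : ∑ i ∈ T, g i ≤ ∑ i ∈ T', g i := hT'max T hT
  refine ⟨T', hcard, hle, ?_, ?_⟩
  · have htotal := (sum_add_sum_compl T g).trans (sum_add_sum_compl T' g).symm
    exact le_of_add_le_add_left (htotal.symm.trans_le (add_le_add hle le_rfl))
  · -- a maximiser is a top set: swapping `i` for a larger `j` would increase the sum
    intro i hi j hj
    by_contra! hlt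
    have hj' : j ∉ T'.erase i := fun h => mem_compl.1 hj (mem_of_mem_erase h)
    have hswap : insert j (T'.erase i) ∈ powersetCard T.card (univ : Finset ι) := by
      refine mem_powersetCard.2 ⟨subset_univ _, ?_⟩
      rw [card_insert_of_notMem hj', card_erase_of_mem hi, ← hcard,
        Nat.sub_add_cancel (card_pos.2 ⟨i, hi⟩)]
    have hswap_le := hT'max _ hswap
    rw [sum_insert hj', ← add_sum_erase T' g hi] at hswap_le
    exact hswap_le.not_gt (add_lt_add_left hlt _)

namespace Real

theorem rpow_le_rpow_mul_rpow_sub {x t p q : ℝ} (ht : 0 < t) (htx : t ≤ x) (hqp : q ≤ p) :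
    x ^ q ≤ x ^ p * t ^ (q - p) := by
  have hx : 0 < x := ht.trans_le htx
  calc x ^ q = x ^ p * x ^ (q - p) := by rw [← rpow_add hx, add_sub_cancel]
    _ ≤ x ^ p * t ^ (q - p) := mul_le_mul_of_nonneg_left
      (rpow_le_rpow_of_nonpos ht htx (sub_nonpos.2 hqp)) (rpow_nonneg hx.le p)

theorem rpow_mul_rpow_sub_le_rpow {x t p q : ℝ} (hx : 0 ≤ x) (hxt : x ≤ t) (hq : 0 < q)
    (hqp : q ≤ p) : x ^ p * t ^ (q - p) ≤ x ^ q := by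
  rcases hx.eq_or_lt with rfl | hx
  · rw [zero_rpow (hq.trans_le hqp).ne', zero_rpow hq.ne', zero_mul]
  calc x ^ p * t ^ (q - p) ≤ x ^ p * x ^ (q - p) := mul_le_mul_of_nonneg_left
        (rpow_le_rpow_of_nonpos hx hxt (sub_nonpos.2 hqp)) (rpow_nonneg hx.le p)
    _ = x ^ q := by rw [← rpow_add hx, add_sub_cancel]

theorem sum_rpow_lt_sum_rpow_of_forall_le {ι : Type*} {U V : Finset ι} {a : ι → ℝ}
    (ha : ∀ i, 0 ≤ a i) {p q : ℝ} (hq : 0 < q) (hqp : q ≤ p)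
    (hUV : ∀ i ∈ U, ∀ j ∈ V, a j ≤ a i) (h : ∑ i ∈ U, a i ^ p < ∑ j ∈ V, a j ^ p) :
    ∑ i ∈ U, a i ^ q < ∑ j ∈ V, a j ^ q := by
  have hp : 0 < p := hq.trans_le hqp
  obtain ⟨j₀, hj₀, hpos⟩ : ∃ j ∈ V, 0 < a j := by
    by_contra! hzero
    have hV : ∑ j ∈ V, a j ^ p = 0 :=
      sum_eq_zero fun j hj => by rw [(hzero j hj).antisymm (ha j), zero_rpow hp.ne']
    exact h.not_ge (hV ▸ sum_nonneg fun i _ => rpow_nonneg (ha i) p)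
  obtain ⟨k, hk, hmax⟩ := exists_max_image V a ⟨j₀, hj₀⟩
  have ht : 0 < a k := hpos.trans_le (hmax j₀ hj₀)
  calc ∑ i ∈ U, a i ^ q ≤ ∑ i ∈ U, a i ^ p * a k ^ (q - p) :=
        sum_le_sum fun i hi => rpow_le_rpow_mul_rpow_sub ht (hUV i hi k hk) hqp
    _ = (∑ i ∈ U, a i ^ p) * a k ^ (q - p) := (sum_mul _ _ _).symm
    _ < (∑ j ∈ V, a j ^ p) * a k ^ (q - p) := mul_lt_mul_of_pos_right h (rpow_pos_of_pos ht _)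
    _ = ∑ j ∈ V, a j ^ p * a k ^ (q - p) := sum_mul _ _ _
    _ ≤ ∑ j ∈ V, a j ^ q :=
        sum_le_sum fun j hj => rpow_mul_rpow_sub_le_rpow (ha j) (hmax j hj) hq hqp

end Real

theorem stmt_7_general (m n : ℕ) (A : Matrix (Fin m) (Fin n) ℝ) (p ρ : ℝ)
    (hNSP : ∀ z : Fin n → ℝ, z ≠ 0 → ∀ T : Finset (Fin m), (T.card : ℝ) ≤ ρ * m →
      ∑ i ∈ T, |A.mulVec z i| ^ p < ∑ i ∈ Tᶜ, |A.mulVec z i| ^ p) :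
    ∀ q : ℝ, 0 < q → q ≤ p →
      ∀ z : Fin n → ℝ, z ≠ 0 → ∀ T : Finset (Fin m), (T.card : ℝ) ≤ ρ * m →
        ∑ i ∈ T, |A.mulVec z i| ^ q < ∑ i ∈ Tᶜ, |A.mulVec z i| ^ q := by
  intro q hq hqp z hz T hT
  obtain ⟨T', hcard, hle, hcompl, htop⟩ :=
    exists_card_eq_sum_le_forall_le (fun i => |A.mulVec z i| ^ q) T
  have hT'top : ∀ i ∈ T', ∀ j ∈ T'ᶜ, |A.mulVec z j| ≤ |A.mulVec z i| := fun i hi j hj =>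
    (Real.rpow_le_rpow_iff (abs_nonneg _) (abs_nonneg _) hq).1 (htop i hi j hj)
  have hT' := hNSP z hz T' (by rwa [hcard])
  calc ∑ i ∈ T, |A.mulVec z i| ^ q ≤ ∑ i ∈ T', |A.mulVec z i| ^ q := hle
    _ < ∑ i ∈ T'ᶜ, |A.mulVec z i| ^ q :=
        Real.sum_rpow_lt_sum_rpow_of_forall_le (fun _ => abs_nonneg _) hq hqp hT'top hT'
    _ ≤ ∑ i ∈ Tᶜ, |A.mulVec z i| ^ q := hcompl

theorem stmt_7 (m n : ℕ) (A : Matrix (Fin m) (Fin n) ℝ) (p ρ : ℝ)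
    (hp0 : 0 < p) (hp1 : p ≤ 1) (hρ0 : 0 < ρ)
    (hker : ∀ z : Fin n → ℝ, A.mulVec z = 0 → z = 0)
    (hNSP : ∀ z : Fin n → ℝ, z ≠ 0 → ∀ T : Finset (Fin m), (T.card : ℝ) ≤ ρ * m →
      ∑ i ∈ T, |A.mulVec z i| ^ p < ∑ i ∈ Tᶜ, |A.mulVec z i| ^ p) :
    ∀ q : ℝ, 0 < q → q ≤ p →
      ∀ z : Fin n → ℝ, z ≠ 0 → ∀ T : Finset (Fin m), (T.card : ℝ) ≤ ρ * m →
        ∑ i ∈ T, |A.mulVec z i| ^ q < ∑ i ∈ Tᶜ, |A.mulVec z i| ^ q :=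
  stmt_7_general m n A p ρ hNSP
end

section
/- For p ∈ (0,1], let z*(p) > 0 be the unique solution of ∫_0^{z*} x^p f(x) dx = ∫_{z*}^∞ x^p f(x) dx, where f is the density of |X| with X ~ N(0,1), and define ρ*(p) = 1 − F(z*(p)) with F the c.d.f. of |X|. Then ρ* is strictly decreasing on (0,1]. -/
/-!
For a positive density `f` on `(0, ∞)` put `g_q(t) = ∫_0^t x^q f - ∫_t^∞ x^q f`; it is increasing
in `t`. If `z` balances the `p`-th moment and `q > p`, then writing `x^q = x^(q-p) x^p` and comparing
`x^(q-p)` with `z^(q-p)` on each side of `z` gives `g_q(z) < 0 = g_q(z*(q))`, hence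
`z*(p) < z*(q)`. Since `F` is strictly increasing, `ρ* = 1 - F ∘ z*` is strictly decreasing.
-/

open MeasureTheory

/-- Density of `|X|` for `X` standard Gaussian. -/
noncomputable def halfGaussianPdf (z : ℝ) : ℝ :=
  Real.sqrt (2 / Real.pi) * Real.exp (-z ^ 2 / 2)

/-- C.d.f. of `|X|` for `X` standard Gaussian. -/
noncomputable def halfGaussianCdf (x : ℝ) : ℝ :=
  ∫ t in (0:ℝ)..x, halfGaussianPdf t

open Set

theorem setIntegral_pos_of_forall_pos {X : Type*} [MeasurableSpace X] {μ : Measure X}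
    {s : Set X} {g : X → ℝ} (hs : MeasurableSet s) (hμs : μ s ≠ 0)
    (hg : IntegrableOn g s μ) (hpos : ∀ x ∈ s, 0 < g x) : 0 < ∫ x in s, g x ∂μ := by
  refine (setIntegral_pos_iff_support_of_nonneg_ae
    (ae_restrict_of_forall_mem hs fun x hx => (hpos x hx).le) hg).2 ?_
  rwa [inter_eq_right.2 fun x hx => Function.mem_support.2 (hpos x hx).ne', pos_iff_ne_zero]

noncomputable def momentImbalance (f : ℝ → ℝ) (p t : ℝ) : ℝ :=
  (∫ x in (0:ℝ)..t, x ^ p * f x) - ∫ x in Ioi t, x ^ p * f x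

section MomentImbalance

variable {f : ℝ → ℝ} {p q : ℝ}

theorem monotoneOn_momentImbalance (hf : ∀ x, 0 < x → 0 ≤ f x)
    (hint : IntegrableOn (fun x => x ^ p * f x) (Ioi 0)) :
    MonotoneOn (momentImbalance f p) (Ioi 0) := by
  intro s hs t ht hst
  have hnonneg : ∀ x ∈ Ioi (0:ℝ), 0 ≤ x ^ p * f x := fun x hx =>
    mul_nonneg (Real.rpow_nonneg (le_of_lt hx) p) (hf x hx)
  have htail : ∫ x in Ioi t, x ^ p * f x ≤ ∫ x in Ioi s, x ^ p * f x :=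
    setIntegral_mono_set (hint.mono_set (Ioi_subset_Ioi (le_of_lt hs)))
      (ae_restrict_of_forall_mem measurableSet_Ioi fun x hx =>
        hnonneg x (mem_Ioi.2 (lt_trans hs hx)))
      (Ioi_subset_Ioi hst).eventuallyLE
  have hsplit : ∀ u ∈ Ioi (0:ℝ), momentImbalance f p u =
      (∫ x in Ioi 0, x ^ p * f x) - 2 * ∫ x in Ioi u, x ^ p * f x := by
    intro u hu
    rw [momentImbalance, ← intervalIntegral.integral_interval_add_Ioi hint
      (hint.mono_set (Ioi_subset_Ioi (le_of_lt hu)))]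
    ring
  rw [hsplit s hs, hsplit t ht]
  linarith

theorem momentImbalance_neg_of_eq_zero (hf : ∀ x, 0 < x → 0 < f x)
    (hpint : IntegrableOn (fun x => x ^ p * f x) (Ioi 0))
    (hqint : IntegrableOn (fun x => x ^ q * f x) (Ioi 0))
    (hpq : p < q) {z : ℝ} (hz : 0 < z) (hbal : momentImbalance f p z = 0) :
    momentImbalance f q z < 0 := by
  have hpow : ∀ x : ℝ, 0 < x → x ^ q = x ^ (q - p) * x ^ p := fun x hx => by
    rw [← Real.rpow_add hx, sub_add_cancel]
  have hIoc : ∀ {g : ℝ → ℝ}, IntegrableOn g (Ioi 0) → IntegrableOn g (Ioc 0 z) :=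
    fun h => h.mono_set Ioc_subset_Ioi_self
  have hIoi : ∀ {g : ℝ → ℝ}, IntegrableOn g (Ioi 0) → IntegrableOn g (Ioi z) :=
    fun h => h.mono_set (Ioi_subset_Ioi hz.le)
  have hlower : ∫ x in (0:ℝ)..z, x ^ q * f x ≤ z ^ (q - p) * ∫ x in (0:ℝ)..z, x ^ p * f x := by
    rw [intervalIntegral.integral_of_le hz.le, intervalIntegral.integral_of_le hz.le,
      ← integral_const_mul]
    refine setIntegral_mono_on (hIoc hqint) ((hIoc hpint).const_mul _) measurableSet_Ioc
      fun x hx => ?_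
    rw [hpow x hx.1, mul_assoc]
    exact mul_le_mul_of_nonneg_right (Real.rpow_le_rpow hx.1.le hx.2 (by linarith))
      (mul_pos (Real.rpow_pos_of_pos hx.1 p) (hf x hx.1)).le
  have hupper : z ^ (q - p) * ∫ x in Ioi z, x ^ p * f x < ∫ x in Ioi z, x ^ q * f x := by
    rw [← sub_pos, ← integral_const_mul, ← integral_sub (hIoi hqint) ((hIoi hpint).const_mul _)]
    refine setIntegral_pos_of_forall_pos measurableSet_Ioi (by simp)
      ((hIoi hqint).sub ((hIoi hpint).const_mul _)) fun x (hx : z < x) => ?_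
    have hx0 : 0 < x := hz.trans hx
    rw [hpow x hx0, sub_pos, mul_assoc]
    exact mul_lt_mul_of_pos_right (Real.rpow_lt_rpow hz.le hx (by linarith))
      (mul_pos (Real.rpow_pos_of_pos hx0 p) (hf x hx0))
  rw [momentImbalance, sub_eq_zero] at hbal
  rw [momentImbalance, sub_neg]
  calc ∫ x in (0:ℝ)..z, x ^ q * f x ≤ z ^ (q - p) * ∫ x in (0:ℝ)..z, x ^ p * f x := hlower
    _ = z ^ (q - p) * ∫ x in Ioi z, x ^ p * f x := by rw [hbal]
    _ < ∫ x in Ioi z, x ^ q * f x := hupper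

end MomentImbalance

theorem halfGaussianPdf_pos (z : ℝ) : 0 < halfGaussianPdf z :=
  mul_pos (Real.sqrt_pos.2 (by positivity)) (Real.exp_pos _)

theorem continuous_halfGaussianPdf : Continuous halfGaussianPdf := by
  unfold halfGaussianPdf
  fun_prop

theorem integrableOn_rpow_mul_halfGaussianPdf {p : ℝ} (hp : -1 < p) :
    IntegrableOn (fun x => x ^ p * halfGaussianPdf x) (Ioi 0) := by
  refine IntegrableOn.congr_fun ((integrableOn_rpow_mul_exp_neg_mul_sq (b := 1 / 2)
    (by norm_num) hp).const_mul (Real.sqrt (2 / Real.pi))) (fun x _ => ?_) measurableSet_Ioi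
  simp only [halfGaussianPdf]
  ring_nf

theorem strictMono_halfGaussianCdf : StrictMono halfGaussianCdf := by
  intro s t hst
  have hint : ∀ a b, IntervalIntegrable halfGaussianPdf volume a b :=
    continuous_halfGaussianPdf.intervalIntegrable
  rw [halfGaussianCdf, halfGaussianCdf, ← intervalIntegral.integral_add_adjacent_intervals
    (hint 0 s) (hint s t), lt_add_iff_pos_right]
  exact intervalIntegral.intervalIntegral_pos_of_pos (hint s t) halfGaussianPdf_pos hst

theorem stmt_9 (zstar : ℝ → ℝ)
    (hzstar : ∀ p ∈ Set.Ioc (0:ℝ) 1, 0 < zstar p ∧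
      ∫ x in (0:ℝ)..(zstar p), x ^ p * halfGaussianPdf x =
        ∫ x in Set.Ioi (zstar p), x ^ p * halfGaussianPdf x) :
    StrictAntiOn (fun p => 1 - halfGaussianCdf (zstar p)) (Set.Ioc (0:ℝ) 1) := by
  intro p hp q hq hpq
  obtain ⟨hzp, hbal_p⟩ := hzstar p hp
  obtain ⟨hzq, hbal_q⟩ := hzstar q hq
  have hint : ∀ r ∈ Ioc (0:ℝ) 1, IntegrableOn (fun x => x ^ r * halfGaussianPdf x) (Ioi 0) :=
    fun r hr => integrableOn_rpow_mul_halfGaussianPdf (by linarith [hr.1])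
  have himb : momentImbalance halfGaussianPdf q (zstar p) <
      momentImbalance halfGaussianPdf q (zstar q) :=
    (momentImbalance_neg_of_eq_zero (fun x _ => halfGaussianPdf_pos x) (hint p hp) (hint q hq)
      hpq hzp (sub_eq_zero.2 hbal_p)).trans_eq (sub_eq_zero.2 hbal_q).symm
  have hz : zstar p < zstar q :=
    (monotoneOn_momentImbalance (fun x _ => (halfGaussianPdf_pos x).le) (hint q hq)).reflect_lt
      hzp hzq himb
  exact sub_lt_sub_left (strictMono_halfGaussianCdf hz) 1
end

section
/- Let 0 < p < 1, A an m×n real matrix, T ⊆ {1,...,m}, and let sign pattern s : T → {−1,+1} be fixed. Suppose there exists z ∈ ℝ^n with ∑_{i∈T, (Az)_i s_i < 0} |(Az)_i|^p > ∑_{i∈T^c} |(Az)_i|^p. Then there exists an error vector e supported on T with sign(e_i) = s_i for i ∈ T such that for some f, f is not a minimizer of x ↦ ∑_i |(Af + e − Ax)_i|^p. -/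
/-!
With `a = A z`, `T⁻ = {i ∈ T : aᵢ sᵢ < 0}` and `t > 0`, let `eᵢ = -t aᵢ` on `T⁻`, `eᵢ = sᵢ` on
`T \ T⁻` and `eᵢ = 0` off `T`, and take `f = t z`. The residual of `x = 0` is `t a + e`: it vanishes
on `T⁻`, is `t a` off `T`, and on `T \ T⁻` it is `sᵢ (1 + t aᵢ sᵢ)` with `aᵢ sᵢ ≥ 0`, so there
`|·|ᵖ ≤ 1 + t aᵢ sᵢ`. Compared with the value `∑ |eᵢ|ᵖ` at `x = f`, this changes the objective by at
most `t B - tᵖ (∑_{T⁻} |aᵢ|ᵖ - ∑_{Tᶜ} |aᵢ|ᵖ)` for a constant `B`, and since `p < 1` the `tᵖ` term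
wins as `t → 0⁺`.
-/

open Filter Topology Finset

theorem exists_pos_mul_lt_rpow_mul {p B δ : ℝ} (hp : p < 1) (hδ : 0 < δ) :
    ∃ t > 0, t * B < t ^ p * δ := by
  have hlim : Tendsto (fun t : ℝ => t ^ (1 - p) * B) (𝓝[>] 0) (𝓝 0) := by
    have hcont : Continuous (fun t : ℝ => t ^ (1 - p) * B) :=
      (Real.continuous_rpow_const (sub_pos.2 hp).le).mul continuous_const
    refine (hcont.tendsto' 0 0 ?_).mono_left nhdsWithin_le_nhds
    rw [Real.zero_rpow (sub_pos.2 hp).ne', zero_mul]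
  obtain ⟨t, hsmall, ht⟩ :=
    ((hlim.eventually (gt_mem_nhds hδ)).and self_mem_nhdsWithin).exists
  refine ⟨t, ht, ?_⟩
  calc t * B = t ^ p * (t ^ (1 - p) * B) := by
        rw [← mul_assoc, ← Real.rpow_add ht, add_sub_cancel, Real.rpow_one]
    _ < t ^ p * δ := mul_lt_mul_of_pos_left hsmall (Real.rpow_pos_of_pos ht p)

theorem Real.rpow_abs_add_le_of_abs_eq_one {u s p : ℝ} (hs : |s| = 1) (hus : 0 ≤ u * s)
    (hp : p ≤ 1) : |u + s| ^ p ≤ 1 + u * s := by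
  have habs : |u + s| = 1 + u * s := by
    have hss : s * s = 1 := by rw [← abs_mul_abs_self, hs, one_mul]
    calc |u + s| = |s * (u + s)| := by rw [abs_mul, hs, one_mul]
      _ = 1 + u * s := by
        rw [show s * (u + s) = 1 + u * s by linear_combination hss, abs_of_nonneg (by linarith)]
  rw [habs]
  calc (1 + u * s) ^ p ≤ (1 + u * s) ^ (1 : ℝ) :=
        Real.rpow_le_rpow_of_exponent_le (by linarith) hp
    _ = 1 + u * s := Real.rpow_one _

section ErrorVector

variable {ι : Type*} [DecidableEq ι] {T : Finset ι} {s a : ι → ℝ} {t p : ℝ}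

noncomputable def errorVec (T : Finset ι) (s a : ι → ℝ) (t : ℝ) (i : ι) : ℝ :=
  if i ∈ T then (if a i * s i < 0 then -(t * a i) else s i) else 0

theorem errorVec_of_notMem {i : ι} (hi : i ∉ T) : errorVec T s a t i = 0 := if_neg hi

theorem sign_errorVec (hs : ∀ i ∈ T, s i = 1 ∨ s i = -1) (ht : 0 < t) {i : ι} (hi : i ∈ T) :
    Real.sign (errorVec T s a t i) = s i := by
  rw [errorVec, if_pos hi]
  rcases hs i hi with hsi | hsi <;> split_ifs with hneg <;> rw [hsi] at hneg ⊢
  · exact Real.sign_of_pos (by nlinarith)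
  · exact Real.sign_one
  · exact Real.sign_of_neg (by nlinarith)
  · exact Real.sign_of_neg (by norm_num)

theorem rpow_abs_add_errorVec_le (hp0 : 0 < p) (hp1 : p ≤ 1)
    (hs : ∀ i ∈ T, s i = 1 ∨ s i = -1) (ht : 0 < t) (i : ι) :
    |t * a i + errorVec T s a t i| ^ p ≤ |errorVec T s a t i| ^ p +
      if i ∈ T then (if a i * s i < 0 then -(t ^ p * |a i| ^ p) else t * (a i * s i))
      else t ^ p * |a i| ^ p := by
  have hscale : |t * a i| ^ p = t ^ p * |a i| ^ p := by
    rw [abs_mul, abs_of_pos ht, Real.mul_rpow ht.le (abs_nonneg _)]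
  rw [errorVec]
  split_ifs with hT hneg
  · rw [add_neg_cancel, abs_zero, abs_neg, hscale, Real.zero_rpow hp0.ne']
    linarith
  · have hsi : |s i| = 1 := by rcases hs i hT with h | h <;> simp [h]
    rw [hsi, Real.one_rpow, ← mul_assoc]
    exact Real.rpow_abs_add_le_of_abs_eq_one hsi (by rw [mul_assoc]; nlinarith) hp1
  · rw [add_zero, hscale, abs_zero, Real.zero_rpow hp0.ne', zero_add]

theorem sum_rpow_abs_add_errorVec_le [Fintype ι] (hp0 : 0 < p) (hp1 : p ≤ 1)
    (hs : ∀ i ∈ T, s i = 1 ∨ s i = -1) (ht : 0 < t) :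
    ∑ i, |t * a i + errorVec T s a t i| ^ p ≤ ∑ i, |errorVec T s a t i| ^ p +
      (t * ∑ i ∈ T.filter (fun i => ¬ a i * s i < 0), a i * s i -
        t ^ p * (∑ i ∈ T.filter (fun i => a i * s i < 0), |a i| ^ p - ∑ i ∈ Tᶜ, |a i| ^ p)) := by
  refine (sum_le_sum fun i _ => rpow_abs_add_errorVec_le hp0 hp1 hs ht i).trans_eq ?_
  rw [sum_add_distrib]
  congr 1
  rw [← sum_add_sum_compl T, sum_ite_of_true (fun i hi => hi),
    sum_ite_of_false (s := Tᶜ) (fun i hi => mem_compl.1 hi), sum_ite, sum_neg_distrib, ← mul_sum,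
    ← mul_sum, ← mul_sum]
  ring

end ErrorVector

theorem stmt_11 (m n : ℕ) (A : Matrix (Fin m) (Fin n) ℝ) (p : ℝ)
    (hp0 : 0 < p) (hp1 : p < 1) (T : Finset (Fin m)) (s : Fin m → ℝ)
    (hs : ∀ i ∈ T, s i = 1 ∨ s i = -1)
    (z : Fin n → ℝ)
    (hfail : ∑ i ∈ T.filter (fun i => A.mulVec z i * s i < 0), |A.mulVec z i| ^ p >
      ∑ i ∈ Tᶜ, |A.mulVec z i| ^ p) :
    ∃ e : Fin m → ℝ,
      (∀ i ∉ T, e i = 0) ∧ (∀ i ∈ T, Real.sign (e i) = s i) ∧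
      ∃ (f : Fin n → ℝ) (x : Fin n → ℝ),
        ∑ i, |A.mulVec f i + e i - A.mulVec x i| ^ p < ∑ i, |e i| ^ p := by
  obtain ⟨t, ht, hsmall⟩ := exists_pos_mul_lt_rpow_mul
    (B := ∑ i ∈ T.filter (fun i => ¬ A.mulVec z i * s i < 0), A.mulVec z i * s i) hp1
    (sub_pos.2 hfail)
  refine ⟨errorVec T s (A.mulVec z) t, fun i hi => errorVec_of_notMem hi,
    fun i hi => sign_errorVec hs ht hi, t • z, 0, ?_⟩
  have hres := sum_rpow_abs_add_errorVec_le (a := A.mulVec z) hp0 hp1.le hs ht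
  simp only [Matrix.mulVec_smul, Matrix.mulVec_zero, Pi.smul_apply, smul_eq_mul, Pi.zero_apply,
    sub_zero]
  linarith
end

section
/- Let 0 < p < 1, A an m×n real matrix with trivial kernel, T ⊆ {1,...,m}, and e ∈ ℝ^m supported on T. If for all nonzero z ∈ ℝ^n we have ∑_{i ∈ T : (Az)_i e_i < 0} |(Az)_i|^p < ∑_{i ∈ T^c} |(Az)_i|^p, then for every f ∈ ℝ^n, f is the unique minimizer of x ↦ ∑_{i=1}^m |(Af + e − Ax)_i|^p. -/
/-!
Put `z = f - x ≠ 0` and `w = A z`, so the residual at `x` is `w + e`. Off `T` it is `w`; on `T`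
where `w_i e_i ≥ 0` it is at least `|e_i|` in absolute value, and on the remaining part of `T`
subadditivity of `t ↦ t ^ p` gives `|w_i + e_i| ^ p ≥ |e_i| ^ p - |w_i| ^ p`. Summing,
`∑ |w + e| ^ p ≥ ∑ |e| ^ p - ∑_{T, w e < 0} |w| ^ p + ∑_{Tᶜ} |w| ^ p`, which exceeds `∑ |e| ^ p`
by the null space property.
-/

open Finset

lemma abs_le_abs_add_of_mul_nonneg {a b : ℝ} (h : 0 ≤ a * b) : |b| ≤ |a + b| := by
  rcases abs_cases (a + b) with ⟨h1, h2⟩ | ⟨h1, h2⟩ <;>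
    rcases abs_cases b with ⟨h3, h4⟩ | ⟨h3, h4⟩ <;> nlinarith

lemma abs_rpow_sub_abs_rpow_le_abs_add_rpow {p : ℝ} (hp0 : 0 ≤ p) (hp1 : p ≤ 1) (a b : ℝ) :
    |b| ^ p - |a| ^ p ≤ |a + b| ^ p := by
  have hb : |b| ≤ |a + b| + |a| := by simpa using abs_add_le (a + b) (-a)
  have := (Real.rpow_le_rpow (abs_nonneg _) hb hp0).trans
    (Real.rpow_add_le_add_rpow (abs_nonneg (a + b)) (abs_nonneg a) hp0 hp1)
  linarith

lemma abs_rpow_sub_ite_le_abs_add_rpow {p : ℝ} (hp0 : 0 ≤ p) (hp1 : p ≤ 1) (a b : ℝ) :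
    |b| ^ p - (if a * b < 0 then |a| ^ p else 0) ≤ |a + b| ^ p := by
  split_ifs with h
  · exact abs_rpow_sub_abs_rpow_le_abs_add_rpow hp0 hp1 a b
  · rw [sub_zero]
    exact Real.rpow_le_rpow (abs_nonneg _) (abs_le_abs_add_of_mul_nonneg (not_lt.1 h)) hp0

lemma sum_abs_rpow_sub_add_le_sum_abs_add_rpow {ι : Type*} [Fintype ι] [DecidableEq ι]
    {p : ℝ} (hp0 : 0 < p) (hp1 : p ≤ 1) (T : Finset ι) (w e : ι → ℝ)
    (hsupp : ∀ i ∉ T, e i = 0) :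
    ∑ i, |e i| ^ p - ∑ i ∈ T.filter (fun i => w i * e i < 0), |w i| ^ p
        + ∑ i ∈ Tᶜ, |w i| ^ p ≤ ∑ i, |w i + e i| ^ p := by
  have hon : ∑ i ∈ T, (|e i| ^ p - if w i * e i < 0 then |w i| ^ p else 0)
      ≤ ∑ i ∈ T, |w i + e i| ^ p :=
    sum_le_sum fun i _ => abs_rpow_sub_ite_le_abs_add_rpow hp0.le hp1 (w i) (e i)
  have hoff : ∑ i ∈ Tᶜ, (|e i| ^ p + |w i| ^ p) = ∑ i ∈ Tᶜ, |w i + e i| ^ p := by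
    refine sum_congr rfl fun i hi => ?_
    rw [hsupp i (mem_compl.1 hi), abs_zero, Real.zero_rpow hp0.ne', zero_add, add_zero]
  rw [sum_sub_distrib, ← sum_filter] at hon
  rw [sum_add_distrib] at hoff
  rw [← sum_add_sum_compl T, ← sum_add_sum_compl T (fun i => |w i + e i| ^ p)]
  linarith

theorem stmt_12_general (m n : ℕ) (A : Matrix (Fin m) (Fin n) ℝ) (p : ℝ)
    (hp0 : 0 < p) (hp1 : p < 1)
    (T : Finset (Fin m)) (e : Fin m → ℝ) (hsupp : ∀ i ∉ T, e i = 0)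
    (hNSP : ∀ z : Fin n → ℝ, z ≠ 0 →
      ∑ i ∈ T.filter (fun i => A.mulVec z i * e i < 0), |A.mulVec z i| ^ p <
        ∑ i ∈ Tᶜ, |A.mulVec z i| ^ p) :
    ∀ (f : Fin n → ℝ) (x : Fin n → ℝ), x ≠ f →
      ∑ i, |e i| ^ p < ∑ i, |A.mulVec f i + e i - A.mulVec x i| ^ p := by
  intro f x hxf
  have hresidual : ∀ i, A.mulVec f i + e i - A.mulVec x i = A.mulVec (f - x) i + e i := by
    intro i
    rw [Matrix.mulVec_sub, Pi.sub_apply]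
    ring
  simp only [hresidual]
  linarith [hNSP (f - x) (sub_ne_zero.2 hxf.symm),
    sum_abs_rpow_sub_add_le_sum_abs_add_rpow hp0 hp1.le T (A.mulVec (f - x)) e hsupp]

theorem stmt_12 (m n : ℕ) (A : Matrix (Fin m) (Fin n) ℝ) (p : ℝ)
    (hp0 : 0 < p) (hp1 : p < 1)
    (hker : ∀ z : Fin n → ℝ, A.mulVec z = 0 → z = 0)
    (T : Finset (Fin m)) (e : Fin m → ℝ) (hsupp : ∀ i ∉ T, e i = 0)
    (hNSP : ∀ z : Fin n → ℝ, z ≠ 0 →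
      ∑ i ∈ T.filter (fun i => A.mulVec z i * e i < 0), |A.mulVec z i| ^ p <
        ∑ i ∈ Tᶜ, |A.mulVec z i| ^ p) :
    ∀ (f : Fin n → ℝ) (x : Fin n → ℝ), x ≠ f →
      ∑ i, |e i| ^ p < ∑ i, |A.mulVec f i + e i - A.mulVec x i| ^ p :=
  stmt_12_general m n A p hp0 hp1 T e hsupp hNSP
end

section
/- Let 0 < p ≤ 1, γ ∈ (0, (1/2)^{1/p}), ε > 0, and let A be an m×n real matrix. Suppose K is a γ-net of the unit sphere of ℝ^n such that for every v ∈ K: (a) the sum of the ⌈ρm⌉ largest values of |(Av)_i|^p is at most (1/2 − δ)S, and (b) (1−ε)S ≤ ∑_i |(Av)_i|^p ≤ (1+ε)S, where S > 0 and δ > 0 are constants. Then for every z ∈ ℝ^n and every T with |T| ≤ ρm: ∑_{i∈T^c} |(Az)_i|^p − ∑_{i∈T} |(Az)_i|^p ≥ S ‖z‖_2^p (2δ − 2γ^p − ε)/(1 − γ^p). -/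
/-!
The sums `∑_{i ∈ T} |(A z)_i| ^ p` are `p`-homogeneous and, for `p ≤ 1`, subadditive. For such an
`f`, let `M` be its supremum on the unit sphere. Writing a unit vector `w` as `v + (w - v)` with `v`
in the net gives `f w ≤ f v + γ ^ p M`, so a bound `B` on the net yields `M ≤ B + γ ^ p M`, i.e.
`M ≤ B / (1 - γ ^ p)`, and a lower bound on the net transfers to the sphere in the same way.
Since `∑_{Tᶜ} - ∑_T = ∑ - 2 ∑_T`, these bounds for `T` and for all indices give the claim on the
sphere, and homogeneity extends it to all `z`.
-/

open Metric

section HomogeneousSubadditive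

variable {E : Type*} [NormedAddCommGroup E] [NormedSpace ℝ E] {f : E → ℝ} {p : ℝ}

theorem apply_zero_of_smul_eq_rpow_mul (hp : 0 < p)
    (hsmul : ∀ c : ℝ, 0 ≤ c → ∀ x, f (c • x) = c ^ p * f x) : f 0 = 0 := by
  simpa [Real.zero_rpow hp.ne'] using hsmul 0 le_rfl 0

theorem apply_le_rpow_norm_mul_of_forall_sphere_le (hp : 0 < p)
    (hsmul : ∀ c : ℝ, 0 ≤ c → ∀ x, f (c • x) = c ^ p * f x) {U : ℝ}
    (hU : ∀ w ∈ sphere (0 : E) 1, f w ≤ U) (x : E) : f x ≤ ‖x‖ ^ p * U := by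
  rcases eq_or_ne x 0 with rfl | hx
  · simp [apply_zero_of_smul_eq_rpow_mul hp hsmul, Real.zero_rpow hp.ne']
  · have hu : ‖x‖⁻¹ • x ∈ sphere (0 : E) 1 := by simp [norm_smul, hx]
    have hx' : ‖x‖ ≠ 0 := norm_ne_zero_iff.2 hx
    calc f x = f (‖x‖ • ‖x‖⁻¹ • x) := by rw [smul_inv_smul₀ hx']
      _ = ‖x‖ ^ p * f (‖x‖⁻¹ • x) := hsmul _ (norm_nonneg x) _
      _ ≤ ‖x‖ ^ p * U := by gcongr; exact hU _ hu

theorem rpow_norm_mul_le_apply_of_forall_sphere_le (hp : 0 < p)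
    (hsmul : ∀ c : ℝ, 0 ≤ c → ∀ x, f (c • x) = c ^ p * f x) {L : ℝ}
    (hL : ∀ w ∈ sphere (0 : E) 1, L ≤ f w) (x : E) : ‖x‖ ^ p * L ≤ f x := by
  have := apply_le_rpow_norm_mul_of_forall_sphere_le (f := fun x => -f x) hp
    (fun c hc x => by simp [hsmul c hc x]) (U := -L) (fun w hw => neg_le_neg (hL w hw)) x
  linarith

theorem nonneg_of_forall_sphere_le (hp : 0 < p)
    (hsmul : ∀ c : ℝ, 0 ≤ c → ∀ x, f (c • x) = c ^ p * f x)
    (hadd : ∀ x y, f (x + y) ≤ f x + f y) {U : ℝ}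
    (hU : ∀ w ∈ sphere (0 : E) 1, f w ≤ U) {w : E} (hw : w ∈ sphere (0 : E) 1) :
    0 ≤ U := by
  have := hadd w (-w)
  rw [add_neg_cancel, apply_zero_of_smul_eq_rpow_mul hp hsmul] at this
  linarith [hU w hw, hU (-w) (by simpa using hw)]

theorem apply_le_apply_add_of_norm_sub_le (hp : 0 < p)
    (hsmul : ∀ c : ℝ, 0 ≤ c → ∀ x, f (c • x) = c ^ p * f x)
    (hadd : ∀ x y, f (x + y) ≤ f x + f y) {U : ℝ}
    (hU : ∀ w ∈ sphere (0 : E) 1, f w ≤ U) (hU0 : 0 ≤ U) {γ : ℝ} {x y : E}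
    (hxy : ‖x - y‖ ≤ γ) : f x ≤ f y + γ ^ p * U :=
  calc f x = f (y + (x - y)) := by rw [add_sub_cancel]
    _ ≤ f y + f (x - y) := hadd _ _
    _ ≤ f y + ‖x - y‖ ^ p * U := by
      gcongr; exact apply_le_rpow_norm_mul_of_forall_sphere_le hp hsmul hU _
    _ ≤ f y + γ ^ p * U := by gcongr

variable {K : Set E} {γ : ℝ}

theorem apply_le_div_of_net (hp : 0 < p)
    (hsmul : ∀ c : ℝ, 0 ≤ c → ∀ x, f (c • x) = c ^ p * f x)
    (hadd : ∀ x y, f (x + y) ≤ f x + f y) (hbdd : BddAbove (f '' sphere 0 1))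
    (hγ : γ ^ p < 1) (hK : ∀ w ∈ sphere (0 : E) 1, ∃ v ∈ K, ‖w - v‖ ≤ γ) {B : ℝ}
    (hB : ∀ v ∈ K, f v ≤ B) : ∀ w ∈ sphere (0 : E) 1, f w ≤ B / (1 - γ ^ p) := by
  intro w hw
  set M := sSup (f '' sphere 0 1)
  have hfM : ∀ u ∈ sphere (0 : E) 1, f u ≤ M := fun u hu => le_csSup hbdd ⟨u, hu, rfl⟩
  have hM0 : 0 ≤ M := nonneg_of_forall_sphere_le hp hsmul hadd hfM hw
  have hMrec : M ≤ B + γ ^ p * M := by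
    refine csSup_le ⟨f w, w, hw, rfl⟩ ?_
    rintro _ ⟨u, hu, rfl⟩
    obtain ⟨v, hvK, huv⟩ := hK u hu
    linarith [apply_le_apply_add_of_norm_sub_le hp hsmul hadd hfM hM0 huv, hB v hvK]
  rw [le_div_iff₀ (by linarith)]
  nlinarith [hfM w hw]

theorem sub_le_apply_of_net (hp : 0 < p)
    (hsmul : ∀ c : ℝ, 0 ≤ c → ∀ x, f (c • x) = c ^ p * f x)
    (hadd : ∀ x y, f (x + y) ≤ f x + f y) {U : ℝ} (hU : ∀ w ∈ sphere (0 : E) 1, f w ≤ U)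
    (hK : ∀ w ∈ sphere (0 : E) 1, ∃ v ∈ K, ‖w - v‖ ≤ γ) {L : ℝ}
    (hL : ∀ v ∈ K, L ≤ f v) :
    ∀ w ∈ sphere (0 : E) 1, L - γ ^ p * U ≤ f w := by
  intro w hw
  obtain ⟨v, hvK, hwv⟩ := hK w hw
  have hU0 := nonneg_of_forall_sphere_le hp hsmul hadd hU hw
  have := apply_le_apply_add_of_norm_sub_le hp hsmul hadd hU hU0
    ((norm_sub_rev v w).trans_le hwv)
  linarith [hL v hvK]

end HomogeneousSubadditive

section MulVecPowSum

variable {ι κ : Type*} [Fintype ι] {p : ℝ}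

noncomputable def mulVecPowSum (A : Matrix κ ι ℝ) (p : ℝ) (T : Finset κ)
    (w : EuclideanSpace ℝ ι) : ℝ :=
  ∑ i ∈ T, |A.mulVec (fun j => w j) i| ^ p

theorem mulVecPowSum_smul (A : Matrix κ ι ℝ) (T : Finset κ) {c : ℝ} (hc : 0 ≤ c)
    (w : EuclideanSpace ℝ ι) : mulVecPowSum A p T (c • w) = c ^ p * mulVecPowSum A p T w := by
  have hmul : ∀ i, A.mulVec (fun j => (c • w) j) i = c * A.mulVec (fun j => w j) i :=
    fun i => congrFun (A.mulVec_smul c (fun j => w j)) i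
  simp only [mulVecPowSum, Finset.mul_sum, hmul, abs_mul, abs_of_nonneg hc,
    Real.mul_rpow hc (abs_nonneg _)]

theorem mulVecPowSum_add_le (hp0 : 0 ≤ p) (hp1 : p ≤ 1) (A : Matrix κ ι ℝ) (T : Finset κ)
    (w w' : EuclideanSpace ℝ ι) :
    mulVecPowSum A p T (w + w') ≤ mulVecPowSum A p T w + mulVecPowSum A p T w' := by
  rw [mulVecPowSum, mulVecPowSum, mulVecPowSum, ← Finset.sum_add_distrib]
  refine Finset.sum_le_sum fun i _ => ?_
  have hadd : A.mulVec (fun j => (w + w') j) i =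
      A.mulVec (fun j => w j) i + A.mulVec (fun j => w' j) i :=
    congrFun (A.mulVec_add (fun j => w j) (fun j => w' j)) i
  rw [hadd]
  calc _ ≤ (|A.mulVec (fun j => w j) i| + |A.mulVec (fun j => w' j) i|) ^ p := by
        gcongr; exact abs_add_le _ _
    _ ≤ _ := Real.rpow_add_le_add_rpow (abs_nonneg _) (abs_nonneg _) hp0 hp1

theorem continuous_mulVecPowSum (hp : 0 ≤ p) (A : Matrix κ ι ℝ) (T : Finset κ) :
    Continuous (mulVecPowSum A p T) := by
  unfold mulVecPowSum
  refine continuous_finsetSum _ fun i _ => ?_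
  refine Continuous.rpow_const ?_ fun _ => Or.inr hp
  exact (continuous_finsetSum _ fun j _ => by fun_prop).abs

theorem le_mulVecPowSum_compl_sub_of_net [Fintype κ] [DecidableEq κ] (hp0 : 0 < p)
    (hp1 : p ≤ 1) (A : Matrix κ ι ℝ) {K : Set (EuclideanSpace ℝ ι)} {γ : ℝ} (hγ : γ ^ p < 1)
    (hK : ∀ w ∈ sphere (0 : EuclideanSpace ℝ ι) 1, ∃ v ∈ K, ‖w - v‖ ≤ γ) {T : Finset κ}
    {B L U : ℝ} (hB : ∀ v ∈ K, mulVecPowSum A p T v ≤ B)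
    (hL : ∀ v ∈ K, L ≤ mulVecPowSum A p .univ v)
    (hU : ∀ v ∈ K, mulVecPowSum A p .univ v ≤ U)
    (z : EuclideanSpace ℝ ι) :
    ‖z‖ ^ p * (L - γ ^ p * (U / (1 - γ ^ p)) - 2 * (B / (1 - γ ^ p))) ≤
      mulVecPowSum A p Tᶜ z - mulVecPowSum A p T z := by
  have hsmul T' c (hc : 0 ≤ c) w := mulVecPowSum_smul (p := p) A T' hc w
  have hadd T' := mulVecPowSum_add_le hp0.le hp1 A T'
  have hbdd T' : BddAbove (mulVecPowSum A p T' '' sphere 0 1) :=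
    (isCompact_sphere 0 1).bddAbove_image (continuous_mulVecPowSum hp0.le A T').continuousOn
  have hupperT := apply_le_div_of_net hp0 (hsmul T) (hadd T) (hbdd T) hγ hK hB
  have hupper := apply_le_div_of_net hp0 (hsmul .univ) (hadd .univ) (hbdd .univ) hγ hK hU
  have hlower := sub_le_apply_of_net hp0 (hsmul .univ) (hadd .univ) hupper hK hL
  refine rpow_norm_mul_le_apply_of_forall_sphere_le
    (f := fun w => mulVecPowSum A p Tᶜ w - mulVecPowSum A p T w) hp0
    (fun c hc w => by rw [hsmul _ c hc, hsmul _ c hc, mul_sub]) (fun w hw => ?_) z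
  have hsplit : mulVecPowSum A p Tᶜ w + mulVecPowSum A p T w = mulVecPowSum A p .univ w :=
    Finset.sum_compl_add_sum T _
  linarith [hupperT w hw, hlower w hw]

end MulVecPowSum

theorem stmt_16_general (m n : ℕ) (A : Matrix (Fin m) (Fin n) ℝ) (p γ ε ρ δ S : ℝ)
    (hp0 : 0 < p) (hp1 : p ≤ 1) (hγ0 : 0 < γ) (hγ : γ < (1/2 : ℝ) ^ (1/p : ℝ))
    (K : Set (EuclideanSpace ℝ (Fin n)))
    (hKnet : ∀ z : EuclideanSpace ℝ (Fin n), ‖z‖ = 1 → ∃ v ∈ K, ‖z - v‖ ≤ γ)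
    (ha : ∀ v ∈ K, ∀ T : Finset (Fin m), T.card ≤ ⌈ρ * m⌉₊ →
      ∑ i ∈ T, |A.mulVec (fun j => v j) i| ^ p ≤ (1/2 - δ) * S)
    (hb : ∀ v ∈ K, (1 - ε) * S ≤ ∑ i, |A.mulVec (fun j => v j) i| ^ p ∧
      ∑ i, |A.mulVec (fun j => v j) i| ^ p ≤ (1 + ε) * S) :
    ∀ z : EuclideanSpace ℝ (Fin n), ∀ T : Finset (Fin m), (T.card : ℝ) ≤ ρ * m →
      ∑ i ∈ Tᶜ, |A.mulVec (fun j => z j) i| ^ p - ∑ i ∈ T, |A.mulVec (fun j => z j) i| ^ p ≥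
        S * ‖z‖ ^ p * (2 * δ - 2 * γ ^ p - ε) / (1 - γ ^ p) := by
  intro z T hT
  have hγp : γ ^ p < 1 / 2 := by
    rwa [one_div p, Real.lt_rpow_inv_iff_of_pos hγ0.le (by norm_num) hp0] at hγ
  have hTk : T.card ≤ ⌈ρ * m⌉₊ := by exact_mod_cast hT.trans (Nat.le_ceil _)
  have h := le_mulVecPowSum_compl_sub_of_net hp0 hp1 A (by linarith)
    (fun w hw => hKnet w (mem_sphere_zero_iff_norm.1 hw)) (fun v hv => ha v hv T hTk)
    (fun v hv => (hb v hv).1) (fun v hv => (hb v hv).2) z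
  have hden : 1 - γ ^ p ≠ 0 := by linarith
  refine le_of_eq_of_le ?_ h
  field_simp
  ring

theorem stmt_16 (m n : ℕ) (A : Matrix (Fin m) (Fin n) ℝ) (p γ ε ρ δ S : ℝ)
    (hp0 : 0 < p) (hp1 : p ≤ 1) (hγ0 : 0 < γ) (hγ : γ < (1/2 : ℝ) ^ (1/p : ℝ))
    (hε : 0 < ε) (hρ0 : 0 < ρ) (hρ1 : ρ ≤ 1) (hδ : 0 < δ) (hS : 0 < S)
    (K : Set (EuclideanSpace ℝ (Fin n)))
    (hKsphere : ∀ v ∈ K, ‖v‖ = 1)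
    (hKnet : ∀ z : EuclideanSpace ℝ (Fin n), ‖z‖ = 1 → ∃ v ∈ K, ‖z - v‖ ≤ γ)
    (ha : ∀ v ∈ K, ∀ T : Finset (Fin m), T.card ≤ ⌈ρ * m⌉₊ →
      ∑ i ∈ T, |A.mulVec (fun j => v j) i| ^ p ≤ (1/2 - δ) * S)
    (hb : ∀ v ∈ K, (1 - ε) * S ≤ ∑ i, |A.mulVec (fun j => v j) i| ^ p ∧
      ∑ i, |A.mulVec (fun j => v j) i| ^ p ≤ (1 + ε) * S) :
    ∀ z : EuclideanSpace ℝ (Fin n), ∀ T : Finset (Fin m), (T.card : ℝ) ≤ ρ * m →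
      ∑ i ∈ Tᶜ, |A.mulVec (fun j => z j) i| ^ p - ∑ i ∈ T, |A.mulVec (fun j => z j) i| ^ p ≥
        S * ‖z‖ ^ p * (2 * δ - 2 * γ ^ p - ε) / (1 - γ ^ p) :=
  stmt_16_general m n A p γ ε ρ δ S hp0 hp1 hγ0 hγ K hKnet ha hb
end
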